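/- Let α : [0,5]_ℤ → ℤ³ be a simple 26-loop with b_i = α(i) for 0 ≤ i ≤ 4 and B = {b₀, b₁, b₂, b₃, b₄} ⊆ ℤ³ with 26-adjacency, let ℤ have 2-adjacency, and define p : ℤ → B by p(i) = b_{i mod 5}. Then p is a (2,26)-covering map, but p is not a radius 2 local isomorphism (for instance, the inverse of p restricted to N₂(0,2) = [−2,2]_ℤ maps the 26-adjacent points b₂ and b₃ to the points 2 and −2, which are not 2-adjacent). (Example 4.6) -/

import Mathlib

open Set

/-- 2-adjacency on `ℤ` (the `l₁`-adjacency on `ℤ`): `x` and `y` are distinct with `|x - y| = 1`. -/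
def adj2 (x y : ℤ) : Prop := |x - y| = 1

/-- 8-adjacency on `ℤ²` (the `l₂`-adjacency on `ℤ²`). -/
def adj8 (p q : ℤ × ℤ) : Prop := p ≠ q ∧ |p.1 - q.1| ≤ 1 ∧ |p.2 - q.2| ≤ 1

/-- 26-adjacency on `ℤ³` (the `l₃`-adjacency on `ℤ³`). -/
def adj26 (p q : ℤ × ℤ × ℤ) : Prop :=
  p ≠ q ∧ |p.1 - q.1| ≤ 1 ∧ |p.2.1 - q.2.1| ≤ 1 ∧ |p.2.2 - q.2.2| ≤ 1

/-- An adjacency relation (as any `l_u`-adjacency is) is symmetric and irreflexive. -/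
def IsAdjacency {A : Type*} (κ : A → A → Prop) : Prop := Symmetric κ ∧ Irreflexive κ

/-- `f` is `(κ,λ)`-continuous on `X`: κ-adjacent points are mapped to equal or λ-adjacent
points. -/
def DigContOn {A B : Type*} (f : A → B) (X : Set A)
    (κ : A → A → Prop) (lam : B → B → Prop) : Prop :=
  ∀ x₀ ∈ X, ∀ x₁ ∈ X, κ x₀ x₁ → f x₀ = f x₁ ∨ lam (f x₀) (f x₁)

/-- `f : [0,m]_ℤ → X` is a digital `κ`-path of length `m` in `X`,
i.e. a `(2,κ)`-continuous map on `[0,m]_ℤ` with values in `X`. -/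
def IsDigPath {A : Type*} (X : Set A) (κ : A → A → Prop) (m : ℕ) (f : ℤ → A) : Prop :=
  (∀ i ∈ Icc (0 : ℤ) (m : ℤ), f i ∈ X) ∧
  ∀ i ∈ Icc (0 : ℤ) (m : ℤ), ∀ j ∈ Icc (0 : ℤ) (m : ℤ),
    adj2 i j → f i = f j ∨ κ (f i) (f j)

/-- There is a digital `κ`-path of length `m` in `X` from `x` to `y`. -/
def ReachIn {A : Type*} (X : Set A) (κ : A → A → Prop) (x y : A) (m : ℕ) : Prop :=
  ∃ f : ℤ → A, IsDigPath X κ m f ∧ f 0 = x ∧ f (m : ℤ) = y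

/-- `X` is `κ`-connected: every two of its points are joined by a `κ`-path in `X`. -/
def DigConnected {A : Type*} (X : Set A) (κ : A → A → Prop) : Prop :=
  ∀ x ∈ X, ∀ y ∈ X, ∃ m : ℕ, ReachIn X κ x y m

/-- The `κ`-neighborhood `N_κ(e₀, ε)` of `e₀` in `X` with radius `ε`:
points of `X` whose shortest `κ`-path distance from `e₀` is at most `ε`, together with `e₀`. -/
def Nbhd {A : Type*} (X : Set A) (κ : A → A → Prop) (e₀ : A) (ε : ℕ) : Set A :=
  {e ∈ X | ∃ m : ℕ, m ≤ ε ∧ ReachIn X κ e₀ e m} ∪ {e₀}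

/-- The restriction of `f` to `X` is a `(κ,λ)`-isomorphism onto `Y`: a `(κ,λ)`-continuous
bijection of `X` onto `Y` whose inverse is `(λ,κ)`-continuous. -/
def IsDigIsoOn {A B : Type*} (f : A → B) (X : Set A) (Y : Set B)
    (κ : A → A → Prop) (lam : B → B → Prop) : Prop :=
  MapsTo f X Y ∧ InjOn f X ∧ SurjOn f X Y ∧ DigContOn f X κ lam ∧
  ∀ x₀ ∈ X, ∀ x₁ ∈ X, lam (f x₀) (f x₁) → x₀ = x₁ ∨ κ x₀ x₁

/-- `p` is a radius-`n` digital `(κ,λ)`-covering map of `E` onto `Bs`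
(`n = 1` gives the usual digital `(κ,λ)`-covering map): a `(κ,λ)`-continuous surjection
such that for each `b ∈ Bs` there is a set `F` of points of the fiber over `b` whose radius-`n`
neighborhoods are pairwise disjoint, partition `p⁻¹(N_λ(b,n))`, and are each mapped
isomorphically onto `N_λ(b,n)` by `p`. -/
def IsRadiusCovering {A B : Type*} (p : A → B) (E : Set A) (Bs : Set B)
    (κ : A → A → Prop) (lam : B → B → Prop) (n : ℕ) : Prop :=
  MapsTo p E Bs ∧ SurjOn p E Bs ∧ DigContOn p E κ lam ∧
  ∀ b ∈ Bs, ∃ F : Set A, F ⊆ {e ∈ E | p e = b} ∧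
    (E ∩ p ⁻¹' (Nbhd Bs lam b n) = ⋃ e ∈ F, Nbhd E κ e n) ∧
    F.Pairwise (fun e e' => Disjoint (Nbhd E κ e n) (Nbhd E κ e' n)) ∧
    ∀ e ∈ F, IsDigIsoOn p (Nbhd E κ e n) (Nbhd Bs lam b n) κ lam

/-- `p` is a radius-`n` local `(κ,λ)`-isomorphism (`n = 1` gives the usual local
`(κ,λ)`-isomorphism): for every `e ∈ E` the restriction of `p` to `N_κ(e,n)` is a
`(κ,λ)`-isomorphism onto `N_λ(p e, n)`. -/
def IsLocalIso {A B : Type*} (p : A → B) (E : Set A) (Bs : Set B)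
    (κ : A → A → Prop) (lam : B → B → Prop) (n : ℕ) : Prop :=
  ∀ e ∈ E, IsDigIsoOn p (Nbhd E κ e n) (Nbhd Bs lam (p e) n) κ lam

/-- `p` has the digital path lifting property: every `λ`-path `a` in `Bs` and every point
`e ∈ E` of the fiber over `a 0` admit a lifting of `a` beginning at `e`. -/
def PathLiftingProp {A B : Type*} (p : A → B) (E : Set A) (Bs : Set B)
    (κ : A → A → Prop) (lam : B → B → Prop) : Prop :=
  ∀ (m : ℕ) (a : ℤ → B), IsDigPath Bs lam m a → ∀ e ∈ E, p e = a 0 →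
    ∃ g : ℤ → A, IsDigPath E κ m g ∧ (∀ i ∈ Icc (0 : ℤ) (m : ℤ), p (g i) = a i) ∧ g 0 = e

/-- `p` has the uniqueness of digital path lifts property: two `κ`-paths in `E` with the
same projection and the same starting point coincide (on their domain `[0,m]_ℤ`). -/
def UniqLiftsProp {A B : Type*} (p : A → B) (E : Set A) (κ : A → A → Prop) : Prop :=
  ∀ (m : ℕ) (a b : ℤ → A), IsDigPath E κ m a → IsDigPath E κ m b →
    (∀ i ∈ Icc (0 : ℤ) (m : ℤ), p (a i) = p (b i)) → a 0 = b 0 →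
    EqOn a b (Icc (0 : ℤ) (m : ℤ))

/-- `p` has the unique path lifting property (u.p.l.): both the path lifting property and
the uniqueness of path lifts property. -/
def UPL {A B : Type*} (p : A → B) (E : Set A) (Bs : Set B)
    (κ : A → A → Prop) (lam : B → B → Prop) : Prop :=
  PathLiftingProp p E Bs κ lam ∧ UniqLiftsProp p E κ

/-- `e` is a conciliator point for `p`: there are `e', e'' ∈ N_κ(e,1)` which are not
`κ`-adjacent but whose images are `λ`-adjacent. -/
def IsConciliator {A B : Type*} (p : A → B) (E : Set A)
    (κ : A → A → Prop) (lam : B → B → Prop) (e : A) : Prop :=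
  ∃ e' ∈ Nbhd E κ e 1, ∃ e'' ∈ Nbhd E κ e 1, ¬ κ e' e'' ∧ lam (p e') (p e'')

/-- `f : [0,m]_ℤ → X` is a simple `κ`-loop of length `m` in `X`: a closed `κ`-path such that
`f 0, …, f (m-1)` are pairwise distinct and `f i`, `f j` are `κ`-adjacent iff
`j = i ± 1 (mod m)`. -/
def IsSimpleLoop {A : Type*} (X : Set A) (κ : A → A → Prop) (m : ℕ) (f : ℤ → A) : Prop :=
  IsDigPath X κ m f ∧ f 0 = f (m : ℤ) ∧
  (∀ i ∈ Ico (0 : ℤ) (m : ℤ), ∀ j ∈ Ico (0 : ℤ) (m : ℤ), f i = f j → i = j) ∧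
  ∀ i ∈ Ico (0 : ℤ) (m : ℤ), ∀ j ∈ Ico (0 : ℤ) (m : ℤ),
    (κ (f i) (f j) ↔ (j % (m : ℤ) = (i + 1) % (m : ℤ) ∨ j % (m : ℤ) = (i - 1) % (m : ℤ)))

/-!
On `ℤ` with 2-adjacency, `N(e, n) = [e - n, e + n]`, and the neighbourhood of radius 1 of a loop
point `a k` consists of `a (k - 1)`, `a k`, `a (k + 1)`. Hence `p` maps `[e - 1, e + 1]` onto
`N(p e, 1)`, and since two integers at distance at most 3 that are congruent modulo a loop length
`m ≥ 4` coincide, this restriction is injective and reflects adjacency. The fibre over `a k` is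
`k + mℤ`, whose radius-1 neighbourhoods are disjoint. For radius 2 the argument breaks down when
`m = 5`: `2, -2 ∈ N(0, 2)` differ by `4 ≡ -1 (mod 5)`, so their images are adjacent.
-/

lemma adj2_iff {x y : ℤ} : adj2 x y ↔ y = x + 1 ∨ y = x - 1 := by
  rw [adj2, abs_eq zero_le_one]
  omega

instance : Std.Symm adj26 where
  symm _ _ := fun ⟨hne, h₁, h₂, h₃⟩ =>
    ⟨hne.symm, by rwa [abs_sub_comm], by rwa [abs_sub_comm], by rwa [abs_sub_comm]⟩

theorem Int.ModEq.eq_of_abs_sub_lt {n a b : ℤ} (h : a ≡ b [ZMOD n]) (hlt : |b - a| < n) :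
    a = b :=
  (sub_eq_zero.mp (Int.eq_zero_of_abs_lt_dvd h.dvd hlt)).symm

lemma IsDigPath.abs_sub_le_of_adj2 {X : Set ℤ} {m : ℕ} {f : ℤ → ℤ}
    (hf : IsDigPath X adj2 m f) : ∀ i : ℕ, i ≤ m → |f i - f 0| ≤ i
  | 0, _ => by simp
  | i + 1, hi => by
    have hstep := hf.2 i (by simp only [mem_Icc]; omega) (i + 1) (by simp only [mem_Icc]; omega)
      (adj2_iff.mpr (by omega))
    have ih := abs_le.mp (hf.abs_sub_le_of_adj2 i (by omega))
    rw [adj2_iff] at hstep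
    push_cast at hstep ⊢
    exact abs_le.mpr (by omega)

lemma reachIn_univ_adj2 (x y : ℤ) : ReachIn univ adj2 x y (y - x).natAbs := by
  refine ⟨fun i => x + max (min i (y - x)) (-i), ⟨fun _ _ => trivial, ?_⟩, ?_, ?_⟩
  · intro i _ j _ hij
    rw [adj2_iff] at hij ⊢
    simp only [min_def, max_def]
    split_ifs <;> omega
  all_goals simp only [min_def, max_def]; split_ifs <;> omega

lemma nbhd_univ_adj2 (e : ℤ) (n : ℕ) : Nbhd univ adj2 e n = Icc (e - n) (e + n) := by
  ext x
  simp only [Nbhd, mem_union, mem_ofPred_eq, mem_singleton_iff, mem_Icc, mem_univ, true_and]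
  constructor
  · rintro (⟨m, hmn, f, hf, rfl, rfl⟩ | rfl)
    · have := abs_le.mp (hf.abs_sub_le_of_adj2 m le_rfl)
      omega
    · omega
  · exact fun hx => .inl ⟨_, by omega, reachIn_univ_adj2 e x⟩

lemma nbhd_one_eq {A : Type*} {X : Set A} {κ : A → A → Prop} [Std.Symm κ] {e : A}
    (he : e ∈ X) : Nbhd X κ e 1 = {x ∈ X | x = e ∨ κ e x} := by
  ext x
  simp only [Nbhd, mem_union, mem_ofPred_eq, mem_singleton_iff]
  constructor
  · rintro (⟨hx, m, hm, f, ⟨-, hadj⟩, rfl, rfl⟩ | rfl)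
    · refine ⟨hx, ?_⟩
      interval_cases m
      · exact .inl rfl
      · exact (hadj 0 (by simp) 1 (by simp) (adj2_iff.mpr (by omega))).imp Eq.symm id
    · exact ⟨he, .inl rfl⟩
  · rintro ⟨hx, rfl | hex⟩
    · exact .inr rfl
    refine .inl ⟨hx, 1, le_rfl, fun i => if i ≤ 0 then e else x, ⟨?_, ?_⟩, by simp, by simp⟩
    · intro i _
      dsimp only
      split_ifs <;> assumption
    · intro i hi j hj hij
      simp only [mem_Icc, Nat.cast_one] at hi hj
      rw [adj2_iff] at hij
      obtain ⟨rfl, rfl⟩ | ⟨rfl, rfl⟩ : (i = 0 ∧ j = 1) ∨ (i = 1 ∧ j = 0) := by omega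
      · exact .inr (by simpa using hex)
      · exact .inr (by simpa using symm hex)

lemma pairwise_disjoint_nbhd_univ_adj2 {n : ℤ} (hn : 3 ≤ n) (k : ℤ) :
    {e : ℤ | e ≡ k [ZMOD n]}.Pairwise
      fun e e' => Disjoint (Nbhd univ adj2 e 1) (Nbhd univ adj2 e' 1) := by
  intro e he e' he' hne
  rw [nbhd_univ_adj2, nbhd_univ_adj2, Set.disjoint_left]
  intro x hx hx'
  simp only [mem_Icc, Nat.cast_one] at hx hx'
  exact hne (he.trans he'.symm |>.eq_of_abs_sub_lt (abs_sub_lt_iff.mpr ⟨by omega, by omega⟩))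

lemma Int.emod_mem_Ico {n : ℤ} (hn : 0 < n) (i : ℤ) : i % n ∈ Ico 0 n :=
  ⟨Int.emod_nonneg _ hn.ne', Int.emod_lt_of_pos _ hn⟩

def periodize {A : Type*} (a : ℤ → A) (m : ℕ) (i : ℤ) : A := a (i % m)

namespace IsSimpleLoop

variable {A : Type*} {X : Set A} {κ : A → A → Prop} {m : ℕ} {a : ℤ → A}

lemma periodize_eq_iff (ha : IsSimpleLoop X κ m a) (hm : 0 < m) {i j : ℤ} :
    periodize a m i = periodize a m j ↔ i ≡ j [ZMOD m] :=
  ⟨ha.2.2.1 _ (Int.emod_mem_Ico (by omega) i) _ (Int.emod_mem_Ico (by omega) j), congrArg a⟩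

lemma adj_periodize_iff (ha : IsSimpleLoop X κ m a) (hm : 0 < m) {i j : ℤ} :
    κ (periodize a m i) (periodize a m j) ↔ j ≡ i + 1 [ZMOD m] ∨ j ≡ i - 1 [ZMOD m] := by
  rw [periodize, periodize,
    ha.2.2.2 _ (Int.emod_mem_Ico (by omega) i) _ (Int.emod_mem_Ico (by omega) j),
    Int.emod_emod, Int.emod_add_emod, Int.emod_sub_emod]
  rfl

lemma nbhd_periodize (ha : IsSimpleLoop X κ m a) [Std.Symm κ] (hm : 0 < m) (k : ℤ) :
    Nbhd (a '' Ico 0 m) κ (periodize a m k) 1 = periodize a m '' Icc (k - 1) (k + 1) := by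
  rw [nbhd_one_eq (e := periodize a m k) (mem_image_of_mem a (Int.emod_mem_Ico (by omega) k))]
  ext x
  constructor
  · rintro ⟨⟨t, ht, rfl⟩, hx⟩
    have ht' : a t = periodize a m t := congrArg a (Int.emod_eq_of_lt ht.1 ht.2).symm
    rw [ht', ha.periodize_eq_iff hm, ha.adj_periodize_iff hm] at hx
    rw [ht']
    rcases hx with hx | hx | hx
    · exact ⟨k, by rw [mem_Icc]; omega, (ha.periodize_eq_iff hm).mpr hx.symm⟩
    · exact ⟨k + 1, by rw [mem_Icc]; omega, (ha.periodize_eq_iff hm).mpr hx.symm⟩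
    · exact ⟨k - 1, by rw [mem_Icc]; omega, (ha.periodize_eq_iff hm).mpr hx.symm⟩
  · rintro ⟨j, hj, rfl⟩
    refine ⟨⟨_, Int.emod_mem_Ico (by omega) j, rfl⟩, ?_⟩
    rw [mem_Icc] at hj
    obtain rfl | rfl | rfl : j = k ∨ j = k + 1 ∨ j = k - 1 := by omega
    · exact .inl rfl
    · exact .inr ((ha.adj_periodize_iff hm).mpr (.inl rfl))
    · exact .inr ((ha.adj_periodize_iff hm).mpr (.inr rfl))

lemma digContOn_periodize (ha : IsSimpleLoop X κ m a) (hm : 0 < m) (s : Set ℤ) :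
    DigContOn (periodize a m) s adj2 κ := by
  intro x _ y _ hxy
  rcases adj2_iff.mp hxy with rfl | rfl
  · exact .inr ((ha.adj_periodize_iff hm).mpr (.inl rfl))
  · exact .inr ((ha.adj_periodize_iff hm).mpr (.inr rfl))

lemma isLocalIso_periodize_one (ha : IsSimpleLoop X κ m a) [Std.Symm κ] (hm : 4 ≤ m) :
    IsLocalIso (periodize a m) univ (a '' Ico 0 m) adj2 κ 1 := by
  intro e _
  rw [nbhd_univ_adj2, Nat.cast_one, ha.nbhd_periodize (by omega)]
  refine ⟨mapsTo_image _ _, ?_, surjOn_image _ _, ha.digContOn_periodize (by omega) _, ?_⟩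
  · intro x hx y hy hxy
    rw [mem_Icc] at hx hy
    exact ((ha.periodize_eq_iff (by omega)).mp hxy).eq_of_abs_sub_lt
      (abs_sub_lt_iff.mpr ⟨by omega, by omega⟩)
  · intro x hx y hy hxy
    rw [mem_Icc] at hx hy
    refine .inr (adj2_iff.mpr ?_)
    rcases (ha.adj_periodize_iff (by omega)).mp hxy with h | h
    · exact .inl (h.eq_of_abs_sub_lt (abs_sub_lt_iff.mpr ⟨by omega, by omega⟩))
    · exact .inr (h.eq_of_abs_sub_lt (abs_sub_lt_iff.mpr ⟨by omega, by omega⟩))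

theorem isRadiusCovering_periodize (ha : IsSimpleLoop X κ m a) [Std.Symm κ] (hm : 4 ≤ m) :
    IsRadiusCovering (periodize a m) univ (a '' Ico 0 m) adj2 κ 1 := by
  refine ⟨fun i _ => mem_image_of_mem a (Int.emod_mem_Ico (by omega) i), ?_,
    ha.digContOn_periodize (by omega) _, ?_⟩
  · rintro _ ⟨t, ht, rfl⟩
    exact ⟨t, trivial, congrArg a (Int.emod_eq_of_lt ht.1 ht.2)⟩
  rintro _ ⟨k, hk, rfl⟩
  have hb : a k = periodize a m k := congrArg a (Int.emod_eq_of_lt hk.1 hk.2).symm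
  refine ⟨{e | e ≡ k [ZMOD m]}, fun e he => ⟨trivial, hb ▸ congrArg a he⟩, ?_,
    pairwise_disjoint_nbhd_univ_adj2 (by omega) k, fun e he => ?_⟩
  · rw [hb, ha.nbhd_periodize (by omega)]
    ext i
    simp only [mem_inter_iff, mem_univ, true_and, mem_preimage, mem_iUnion, mem_ofPred_eq,
      nbhd_univ_adj2, Nat.cast_one, exists_prop, mem_image, mem_Icc]
    constructor
    · rintro ⟨c, hc, hci⟩
      have hci := (ha.periodize_eq_iff (by omega)).mp hci
      exact ⟨i + k - c, by simpa using (hci.symm.add_right k).sub_right c, by omega, by omega⟩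
    · rintro ⟨e, he, hi⟩
      refine ⟨k + (i - e), ⟨by omega, by omega⟩, (ha.periodize_eq_iff (by omega)).mpr ?_⟩
      simpa using he.symm.add_right (i - e)
  · rw [hb, show periodize a m k = periodize a m e from congrArg a he.symm]
    exact ha.isLocalIso_periodize_one hm e trivial

theorem not_isLocalIso_periodize_two (ha : IsSimpleLoop X κ 5 a) {Bs : Set A} :
    ¬ IsLocalIso (periodize a 5) univ Bs adj2 κ 2 := by
  intro h
  obtain ⟨-, -, -, -, hinv⟩ := h 0 trivial
  have hmem : ∀ i : ℤ, -2 ≤ i → i ≤ 2 → i ∈ Nbhd univ adj2 0 2 := fun i h₁ h₂ => by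
    rw [nbhd_univ_adj2]
    exact ⟨by omega, by omega⟩
  have hadj : κ (periodize a 5 2) (periodize a 5 (-2)) :=
    (ha.adj_periodize_iff (by norm_num)).mpr (.inl (by decide))
  rcases hinv 2 (hmem 2 (by norm_num) le_rfl) (-2) (hmem (-2) le_rfl (by norm_num)) hadj with h | h
  · norm_num at h
  · rw [adj2_iff] at h
    omega

end IsSimpleLoop

/-- Example 4.6: for a simple 26-loop `a : [0,5]_ℤ → ℤ³`, `B = {a 0, …, a 4}` with
26-adjacency and `p : ℤ → B` given by `p i = a (i mod 5)`, the map `p` is a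
`(2,26)`-covering map but not a radius 2 local isomorphism. -/
theorem example_4_6 (a : ℤ → ℤ × ℤ × ℤ) (ha : IsSimpleLoop Set.univ adj26 5 a)
    (p : ℤ → ℤ × ℤ × ℤ) (hp : ∀ i : ℤ, p i = a (i % 5)) :
    IsRadiusCovering p Set.univ (a '' Set.Icc (0 : ℤ) 4) adj2 adj26 1 ∧
    ¬ IsLocalIso p Set.univ (a '' Set.Icc (0 : ℤ) 4) adj2 adj26 2 := by
  obtain rfl : p = periodize a 5 := funext hp
  have hB : Icc (0 : ℤ) 4 = Ico 0 ((5 : ℕ) : ℤ) := by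
    ext
    simp only [mem_Icc, mem_Ico]
    omega
  rw [hB]
  exact ⟨ha.isRadiusCovering_periodize (by norm_num), ha.not_isLocalIso_periodize_two⟩
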